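/- Let M' : Fin 2 → Matrix (Fin 3) (Fin 3) ℚ be given by M' 0 = (1/3)·![![1,0,0],![0,2,0],![0,0,1]] and M' 1 = (1/3)·![![1,0,0],![0,2,1],![0,0,1]]. Then for every c : ℚ, every e : ℕ and every binary word w : List (Fin 2), applying the matrices M' d for the successive digits d of w (in order, leftmost first) to the vector ![c, (e : ℚ), 1] yields ((1/3 : ℚ)^w.length) • ![c, ((encFrom e w : ℕ) : ℚ), 1], where encFrom e w = w.foldl (fun acc d => 2 * acc + (d : ℕ)) e. Formally: w.foldl (fun v d => (M' d).mulVec v) ![c, (e : ℚ), 1] = ((1/3 : ℚ)^w.length) • ![c, ((encFrom e w : ℕ) : ℚ), 1]. -/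

import Mathlib

/-- Value of the binary word `w` in base 2 (most significant digit first),
starting from the value `e`. -/
def encFrom (e : ℕ) (w : List (Fin 2)) : ℕ :=
  w.foldl (fun acc d => 2 * acc + (d : ℕ)) e

/-- The outcome-1 operation elements of the superoperators `ℰ'_a` and `ℰ'_b`. -/
def M' : Fin 2 → Matrix (Fin 3) (Fin 3) ℚ :=
  ![(1/3 : ℚ) • !![1, 0, 0; 0, 2, 0; 0, 0, 1],
    (1/3 : ℚ) • !![1, 0, 0; 0, 2, 1; 0, 0, 1]]

open Matrix

theorem List.foldl_mulVec_smul {α n R : Type*} [Fintype n] [CommSemiring R]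
    (A : α → Matrix n n R) (s : R) (v : n → R) (w : List α) :
    w.foldl (fun v d => A d *ᵥ v) (s • v) = s • w.foldl (fun v d => A d *ᵥ v) v := by
  induction w generalizing v with
  | nil => rfl
  | cons d t ih => simp only [List.foldl_cons, mulVec_smul, ih]

theorem encFrom_cons (e : ℕ) (d : Fin 2) (w : List (Fin 2)) :
    encFrom e (d :: w) = encFrom (2 * e + d) w := rfl

theorem M'_mulVec (c x : ℚ) (d : Fin 2) :
    M' d *ᵥ ![c, x, 1] = (1/3 : ℚ) • ![c, 2 * x + (d : ℕ), 1] := by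
  fin_cases d <;> ext i <;> fin_cases i <;> simp [M', mulVec] <;> ring

theorem encode_second_amplitude (c : ℚ) (e : ℕ) (w : List (Fin 2)) :
    w.foldl (fun v d => (M' d).mulVec v) ![c, (e : ℚ), 1] =
      ((1/3 : ℚ) ^ w.length) • ![c, ((encFrom e w : ℕ) : ℚ), 1] := by
  induction w generalizing e with
  | nil => simp [encFrom]
  | cons d t ih =>
    have ih_next := ih (2 * e + d)
    push_cast at ih_next
    rw [List.foldl_cons, M'_mulVec, List.foldl_mulVec_smul, ih_next, smul_smul, encFrom_cons,
      List.length_cons, pow_succ']
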